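/- arXiv:1311.0924 — 3 statements merged into one kernel-verified Lean document; each statement's English description precedes it below -/
import Mathlib

section
/- Let b_1, …, b_n be gross substitutes (GS) valuations. Then for every agent i and every subset x ⊆ Fin m, the marginal welfare of x with respect to the other agents is at most the marginal welfare of x with respect to all agents: W^{b_{-i}}(Fin m) − W^{b_{-i}}(Fin m \ x) ≤ W^b(Fin m) − W^b(Fin m \ x). -/
open Finset

/-- A valuation on `m` items: normalized at `∅`, monotone, nonnegative. -/
def IsValuation {m : ℕ} (v : Finset (Fin m) → ℝ) : Prop :=
  v ∅ = 0 ∧ (∀ S T : Finset (Fin m), S ⊆ T → v S ≤ v T) ∧ (∀ S, 0 ≤ v S)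

/-- `S` is in the demand set of valuation `v` at prices `p`. -/
def InDemand {m : ℕ} (v : Finset (Fin m) → ℝ) (p : Fin m → ℝ) (S : Finset (Fin m)) : Prop :=
  ∀ T : Finset (Fin m), v T - ∑ j ∈ T, p j ≤ v S - ∑ j ∈ S, p j

/-- Gross substitutes valuations. -/
def IsGS {m : ℕ} (v : Finset (Fin m) → ℝ) : Prop :=
  IsValuation v ∧
    ∀ p q : Fin m → ℝ, (∀ j, p j ≤ q j) →
      ∀ S : Finset (Fin m), InDemand v p S →
        ∃ T : Finset (Fin m), InDemand v q T ∧ ∀ j ∈ S, p j = q j → j ∈ T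

/-- Additive valuations. -/
def IsAdditive {m : ℕ} (v : Finset (Fin m) → ℝ) : Prop :=
  ∃ w : Fin m → ℝ, (∀ j, 0 ≤ w j) ∧ ∀ S : Finset (Fin m), v S = ∑ j ∈ S, w j

/-- XOS valuations: a max over a nonempty finite family of nonnegative additive valuations. -/
def IsXOS {m : ℕ} (v : Finset (Fin m) → ℝ) : Prop :=
  ∃ (k : ℕ) (w : Fin (k + 1) → Fin m → ℝ),
    (∀ i j, 0 ≤ w i j) ∧
    ∀ S : Finset (Fin m),
      v S = Finset.univ.sup' Finset.univ_nonempty (fun i => ∑ j ∈ S, w i j)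

def GSvals (m : ℕ) : Set (Finset (Fin m) → ℝ) := {u | IsGS u}
def XOSvals (m : ℕ) : Set (Finset (Fin m) → ℝ) := {u | IsXOS u}

/-- The welfare `W^b(S)`: the maximum of `∑ i, b i (X i)` over allocations (pairwise disjoint
tuples of subsets) contained in `S`. -/
noncomputable def W {n m : ℕ} (b : Fin n → Finset (Fin m) → ℝ) (S : Finset (Fin m)) : ℝ :=
  sSup {t : ℝ | ∃ X : Fin n → Finset (Fin m),
    (∀ i j : Fin n, i ≠ j → Disjoint (X i) (X j)) ∧ (∀ i, X i ⊆ S) ∧ t = ∑ i, b i (X i)}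

/-- The welfare `W^{b₋ᵢ}(S)` with agent `i` omitted. -/
noncomputable def Wminus {n m : ℕ} (b : Fin n → Finset (Fin m) → ℝ) (i : Fin n)
    (S : Finset (Fin m)) : ℝ :=
  sSup {t : ℝ | ∃ X : Fin n → Finset (Fin m),
    (∀ k l : Fin n, k ≠ l → Disjoint (X k) (X l)) ∧ (∀ k, X k ⊆ S) ∧
    t = ∑ k ∈ Finset.univ.erase i, b k (X k)}

/-- The welfare `W^b(x)` for a multiplicity vector `x : Fin m → ℕ`: maximum of `∑ i, b i (X i)`
over tuples of sets in which each item `j` is used at most `x j` times. -/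
noncomputable def Wmult {n m : ℕ} (b : Fin n → Finset (Fin m) → ℝ) (x : Fin m → ℕ) : ℝ :=
  sSup {t : ℝ | ∃ X : Fin n → Finset (Fin m),
    (∀ j : Fin m, (Finset.univ.filter fun i => j ∈ X i).card ≤ x j) ∧ t = ∑ i, b i (X i)}

/-- The optimal welfare for the true valuations. -/
noncomputable def OPT {n m : ℕ} (v : Fin n → Finset (Fin m) → ℝ) : ℝ := W v Finset.univ

/-- A mechanism: allocation and payment maps on bid profiles. -/
structure Mechanism (n m : ℕ) where
  alloc : (Fin n → Finset (Fin m) → ℝ) → Fin n → Finset (Fin m)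
  pay : (Fin n → Finset (Fin m) → ℝ) → Fin n → ℝ

/-- A bid profile lies in the bid space `B`. -/
def InBidSpace {n m : ℕ} (B : Set (Finset (Fin m) → ℝ))
    (b : Fin n → Finset (Fin m) → ℝ) : Prop :=
  ∀ i, b i ∈ B

/-- On bid profiles from `B`, the allocation is pairwise disjoint. -/
def AllocDisjoint {n m : ℕ} (M : Mechanism n m) (B : Set (Finset (Fin m) → ℝ)) : Prop :=
  ∀ b, InBidSpace B b → ∀ i j : Fin n, i ≠ j → Disjoint (M.alloc b i) (M.alloc b j)

/-- On bid profiles from `B`, payments are nonnegative. -/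
def PayNonneg {n m : ℕ} (M : Mechanism n m) (B : Set (Finset (Fin m) → ℝ)) : Prop :=
  ∀ b, InBidSpace B b → ∀ i, 0 ≤ M.pay b i

/-- The utility of agent `i` with true valuation `v` under bid profile `b`. -/
noncomputable def util {n m : ℕ} (M : Mechanism n m) (v : Finset (Fin m) → ℝ) (i : Fin n)
    (b : Fin n → Finset (Fin m) → ℝ) : ℝ :=
  v (M.alloc b i) - M.pay b i

/-- Declared welfare maximizer. -/
def IsDWM {n m : ℕ} (M : Mechanism n m) (B : Set (Finset (Fin m) → ℝ)) : Prop :=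
  (∀ b, InBidSpace B b → ∑ i, b i (M.alloc b i) = W b Finset.univ) ∧
  (∀ b, InBidSpace B b → ∀ i, M.pay b i ≤ b i (M.alloc b i)) ∧
  (∀ b, InBidSpace B b → ∀ i : Fin n, ∃ b' : Fin n → Finset (Fin m) → ℝ,
    InBidSpace B b' ∧ b' i = b i ∧ M.alloc b' i = M.alloc b i ∧
    M.pay b' i = b i (M.alloc b i))

/-- English Walrasian mechanism: welfare-maximizing allocation w.r.t. the bids, with
payments given by the minimum Walrasian prices `W^b(𝟙 + e_j) − W^b(𝟙)`. -/
def IsEnglish {n m : ℕ} (M : Mechanism n m) (B : Set (Finset (Fin m) → ℝ)) : Prop :=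
  (∀ b, InBidSpace B b → ∑ i, b i (M.alloc b i) = W b Finset.univ) ∧
  (∀ b, InBidSpace B b → ∀ i, M.pay b i =
    ∑ j ∈ M.alloc b i,
      (Wmult b (fun k => if k = j then 2 else 1) - Wmult b (fun _ => 1)))

/-- VCG mechanism: welfare-maximizing allocation w.r.t. the bids, with externality payments. -/
def IsVCG {n m : ℕ} (M : Mechanism n m) (B : Set (Finset (Fin m) → ℝ)) : Prop :=
  (∀ b, InBidSpace B b → ∑ i, b i (M.alloc b i) = W b Finset.univ) ∧
  (∀ b, InBidSpace B b → ∀ i, M.pay b i =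
    Wminus b i Finset.univ - Wminus b i (Finset.univ \ M.alloc b i))

/-- Bid `bi` of agent `i` with true valuation `v` has exposure factor `γ`. -/
def HasExposureFactor {n m : ℕ} (M : Mechanism n m) (B : Set (Finset (Fin m) → ℝ))
    (v : Finset (Fin m) → ℝ) (i : Fin n) (bi : Finset (Fin m) → ℝ) (γ : ℝ) : Prop :=
  ∀ b : Fin n → Finset (Fin m) → ℝ, InBidSpace B b → b i = bi →
    M.pay b i ≤ (1 + γ) * v (M.alloc b i)

/-- `b` is a pure Nash equilibrium for true valuations `v`. -/
noncomputable def IsNash {n m : ℕ} (M : Mechanism n m) (B : Set (Finset (Fin m) → ℝ))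
    (v b : Fin n → Finset (Fin m) → ℝ) : Prop :=
  InBidSpace B b ∧
  ∀ i : Fin n, ∀ bi' ∈ B, util M (v i) i (Function.update b i bi') ≤ util M (v i) i b

/-- A finitely supported probability distribution. -/
structure FinDist (α : Type*) where
  supp : Finset α
  μ : α → ℝ
  nonneg : ∀ a, 0 ≤ μ a
  sum_one : ∑ a ∈ supp, μ a = 1

/-- Expectation of `f` under a finitely supported distribution. -/
noncomputable def FinDist.exp {α : Type*} (D : FinDist α) (f : α → ℝ) : ℝ :=
  ∑ a ∈ D.supp, D.μ a * f a

/-- Bayes-Nash equilibrium: strategies map types in `V` to bids in `B`, and no unilateral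
deviation (depending only on the agent's own type) improves expected utility. -/
noncomputable def IsBNE {n m : ℕ} (M : Mechanism n m) (V B : Set (Finset (Fin m) → ℝ))
    (D : FinDist (Fin n → Finset (Fin m) → ℝ))
    (s : Fin n → (Finset (Fin m) → ℝ) → Finset (Fin m) → ℝ) : Prop :=
  (∀ i : Fin n, ∀ vi ∈ V, s i vi ∈ B) ∧
  ∀ i : Fin n, ∀ s' : (Finset (Fin m) → ℝ) → Finset (Fin m) → ℝ, (∀ vi ∈ V, s' vi ∈ B) →
    D.exp (fun v => util M (v i) i (Function.update (fun k => s k (v k)) i (s' (v i)))) ≤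
    D.exp (fun v => util M (v i) i (fun k => s k (v k)))

/-- Strategy `si` of agent `i` has exposure factor `γ` under distribution `D`. -/
noncomputable def BayesExposure {n m : ℕ} (M : Mechanism n m)
    (V B : Set (Finset (Fin m) → ℝ)) (D : FinDist (Fin n → Finset (Fin m) → ℝ)) (i : Fin n)
    (si : (Finset (Fin m) → ℝ) → Finset (Fin m) → ℝ) (γ : ℝ) : Prop :=
  ∀ c : (Finset (Fin m) → ℝ) → Fin n → Finset (Fin m) → ℝ,
    (∀ vi ∈ V, InBidSpace B (c vi) ∧ c vi i = si vi) →
    D.exp (fun v => M.pay (c (v i)) i) ≤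
      (1 + γ) * D.exp (fun v => (v i) (M.alloc (c (v i)) i))

/-!
For nonnegative prices `p`, the welfare of agents `K` on items `S` is at most the dual value
`∑ k ∈ K, v*ₖ(p) + ∑ e ∈ S, p e`, where `v*` is the indirect utility `p ↦ max_T (v T - p(T))`.
For gross substitutes this bound is tight up to any `δ > 0`: an ascending auction with increment
`ε` ends at prices whose dual value exceeds the welfare by at most `ε · #agents · #items`.
Gross substitutes also makes every `v*` submodular in the prices; it is enough to check this in
two coordinates, where it is the exchange property of demand. Now take near-optimal dual prices
`p` for `W^b(univ)` and `q` for `W^{b₋ᵢ}(univ \ x)`. Then `p ⊓ q` bounds `W^{b₋ᵢ}(univ)` and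
`p ⊔ q` bounds `W^b(univ \ x)`, and by submodularity their total dual value is at most that of
`p` and `q`.
-/

section LocalSubmodularity

variable {ι : Type*} [DecidableEq ι]

def IsLocallySubmodular (f : (ι → ℝ) → ℝ) : Prop :=
  ∀ y j k, j ≠ k → ∀ δ ε : ℝ, 0 ≤ δ → 0 ≤ ε →
    f y + f (y + Pi.single j δ + Pi.single k ε) ≤ f (y + Pi.single j δ) + f (y + Pi.single k ε)

variable {f : (ι → ℝ) → ℝ}

theorem IsLocallySubmodular.add_single_add_sum (hf : IsLocallySubmodular f)
    {j : ι} {δ : ℝ} (hδ : 0 ≤ δ) (d : ι → ℝ) (K : Finset ι) (hjK : j ∉ K)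
    (hd : ∀ k ∈ K, 0 ≤ d k) (y : ι → ℝ) :
    f y + f (y + Pi.single j δ + ∑ k ∈ K, Pi.single k (d k)) ≤
      f (y + Pi.single j δ) + f (y + ∑ k ∈ K, Pi.single k (d k)) := by
  induction K using Finset.induction_on generalizing y with
  | empty => simp [add_comm]
  | insert k K hkK ih =>
    rw [mem_insert, not_or] at hjK
    have hstep := ih hjK.2 (fun l hl => hd l (mem_insert_of_mem hl)) (y + Pi.single k (d k))
    have hloc := hf y j k hjK.1 δ (d k) hδ (hd k (mem_insert_self k K))
    rw [add_right_comm y (Pi.single j δ)] at hloc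
    rw [sum_insert hkK, ← add_assoc, ← add_assoc, add_right_comm y (Pi.single j δ)]
    linarith

theorem IsLocallySubmodular.add_sum_add_sum (hf : IsLocallySubmodular f)
    (c d : ι → ℝ) (J K : Finset ι) (hJK : Disjoint J K)
    (hc : ∀ j ∈ J, 0 ≤ c j) (hd : ∀ k ∈ K, 0 ≤ d k) (y : ι → ℝ) :
    f y + f (y + ∑ j ∈ J, Pi.single j (c j) + ∑ k ∈ K, Pi.single k (d k)) ≤
      f (y + ∑ j ∈ J, Pi.single j (c j)) + f (y + ∑ k ∈ K, Pi.single k (d k)) := by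
  induction J using Finset.induction_on generalizing y with
  | empty => simp
  | insert j J hjJ ih =>
    rw [disjoint_insert_left] at hJK
    have hstep := ih hJK.2 (fun l hl => hc l (mem_insert_of_mem hl)) (y + Pi.single j (c j))
    have hone := hf.add_single_add_sum (hc j (mem_insert_self j J)) d K hJK.1 hd y
    rw [sum_insert hjJ, ← add_assoc y]
    linarith

theorem IsLocallySubmodular.inf_add_sup_le [Fintype ι] (hf : IsLocallySubmodular f)
    (p q : ι → ℝ) : f (p ⊓ q) + f (p ⊔ q) ≤ f p + f q := by
  set J := univ.filter fun e => q e < p e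
  have key := hf.add_sum_add_sum (p - q) (q - p) J Jᶜ disjoint_compl_right
    (fun e he => by
      simp only [J, mem_filter, mem_univ, true_and] at he
      simp only [Pi.sub_apply, sub_nonneg]
      exact he.le)
    (fun e he => by
      simp only [J, compl_filter, not_lt, mem_filter, mem_univ, true_and] at he
      simpa using he)
    (p ⊓ q)
  convert key using 3 <;> funext e <;> by_cases he : q e < p e <;>
    simp [J, Finset.sum_apply, he, le_of_lt, not_lt.mp]

end LocalSubmodularity

section IndirectUtility

variable {m : ℕ} (v : Finset (Fin m) → ℝ)

def surplus (p : Fin m → ℝ) (T : Finset (Fin m)) : ℝ := v T - ∑ j ∈ T, p j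

noncomputable def indirectUtility (p : Fin m → ℝ) : ℝ := univ.sup' univ_nonempty (surplus v p)

theorem surplus_le_indirectUtility (p : Fin m → ℝ) (T : Finset (Fin m)) :
    surplus v p T ≤ indirectUtility v p :=
  le_sup' _ (mem_univ T)

variable {v}

theorem InDemand.indirectUtility_eq {p : Fin m → ℝ} {S : Finset (Fin m)} (hS : InDemand v p S) :
    indirectUtility v p = surplus v p S :=
  le_antisymm (sup'_le _ _ fun T _ => hS T) (surplus_le_indirectUtility v p S)

variable (v)

theorem exists_inDemand (p : Fin m → ℝ) : ∃ S, InDemand v p S := by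
  obtain ⟨S, -, hS⟩ := exists_max_image univ (surplus v p) univ_nonempty
  exact ⟨S, fun T => hS T (mem_univ T)⟩

theorem surplus_add_single (p : Fin m → ℝ) (j : Fin m) (t : ℝ) (T : Finset (Fin m)) :
    surplus v (p + Pi.single j t) T = surplus v p T - if j ∈ T then t else 0 := by
  simp only [surplus, Pi.add_apply, sum_add_distrib, sum_pi_single']
  ring

theorem indirectUtility_antitone : Antitone (indirectUtility v) := fun p _ hpq =>
  sup'_le _ _ fun T _ => (sub_le_sub_left (sum_le_sum fun j _ => hpq j) _).trans
    (surplus_le_indirectUtility v p T)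

theorem le_self_add_single (p : Fin m → ℝ) (j : Fin m) {t : ℝ} (ht : 0 ≤ t) :
    p ≤ p + Pi.single j t :=
  le_add_of_nonneg_right (Pi.single_nonneg.2 ht)

theorem indirectUtility_add_single_le (p : Fin m → ℝ) (j : Fin m) {t : ℝ} (ht : 0 ≤ t) :
    indirectUtility v (p + Pi.single j t) ≤ indirectUtility v p :=
  indirectUtility_antitone v (le_self_add_single p j ht)

theorem indirectUtility_le_add_of_le_add {P q : Fin m → ℝ} {ε : ℝ} (hε : 0 ≤ ε)
    (hq : ∀ e, q e ≤ P e + ε) :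
    indirectUtility v P ≤ indirectUtility v q + ε * m := by
  refine sup'_le _ _ fun T _ => ?_
  have hsum : ∑ e ∈ T, q e ≤ ∑ e ∈ T, P e + ε * m := by
    have hcard : (T.card : ℝ) ≤ m := by
      exact_mod_cast (card_le_univ T).trans_eq (Fintype.card_fin m)
    calc ∑ e ∈ T, q e ≤ ∑ e ∈ T, (P e + ε) := sum_le_sum fun e _ => hq e
      _ = ∑ e ∈ T, P e + ε * T.card := by rw [sum_add_distrib, sum_const, nsmul_eq_mul, mul_comm]
      _ ≤ ∑ e ∈ T, P e + ε * m := by gcongr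
  have h := surplus_le_indirectUtility v q T
  simp only [surplus] at h ⊢
  linarith

variable {v}

theorem InDemand.price_le_of_mem (hv : IsValuation v) {P : Fin m → ℝ} {D : Finset (Fin m)}
    (hD : InDemand v P D) {e : Fin m} (he : e ∈ D) :
    P e ≤ v univ := by
  have h := hD (D.erase e)
  rw [← sum_erase_add D P he] at h
  linarith [hv.2.2 (D.erase e), hv.2.1 D univ (subset_univ D)]

end IndirectUtility

section GrossSubstitutes

variable {m : ℕ} {v : Finset (Fin m) → ℝ}

theorem IsGS.exists_erase_subset_of_inDemand (hv : IsGS v) {p : Fin m → ℝ} {A : Finset (Fin m)}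
    (hA : InDemand v p A) (k : Fin m) :
    ∃ Z, A.erase k ⊆ Z ∧ k ∉ Z ∧ ∀ X, k ∉ X → surplus v p X ≤ surplus v p Z := by
  -- raising the price of `k` by more than any possible gain in surplus expels `k` from demand
  set t := indirectUtility v p - surplus v p ∅ + 1
  have ht : 0 ≤ t := by linarith [surplus_le_indirectUtility v p ∅]
  obtain ⟨Z, hZ, hAZ⟩ := hv.2 p (p + Pi.single k t)
    (le_self_add_single p k ht) A hA
  have hsurplus : ∀ X, surplus v (p + Pi.single k t) X ≤ surplus v (p + Pi.single k t) Z := hZ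
  have hkZ : k ∉ Z := by
    intro hkZ
    have h := hsurplus ∅
    simp only [surplus_add_single, hkZ, if_true, notMem_empty, if_false] at h
    linarith [surplus_le_indirectUtility v p Z]
  refine ⟨Z, fun e he => hAZ e (mem_of_mem_erase he) ?_, hkZ, fun X hkX => ?_⟩
  · simp [ne_of_mem_erase he]
  · simpa [surplus_add_single, hkX, hkZ] using hsurplus X

theorem IsGS.exists_surplus_add_le (hv : IsGS v) {p : Fin m → ℝ} {j k : Fin m} (hjk : j ≠ k)
    {t : ℝ} {A : Finset (Fin m)} (hA : InDemand v (p + Pi.single j t + Pi.single k t) A)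
    (hjA : j ∈ A) {C : Finset (Fin m)} (hjC : j ∉ C) (hkC : k ∉ C) :
    ∃ Z, j ∈ Z ∧ k ∉ Z ∧ surplus v p C + t ≤ surplus v p Z := by
  obtain ⟨Z, hAZ, hkZ, hZ⟩ := hv.exists_erase_subset_of_inDemand hA k
  have hjZ : j ∈ Z := hAZ (mem_erase.2 ⟨hjk, hjA⟩)
  refine ⟨Z, hjZ, hkZ, ?_⟩
  have h := hZ C hkC
  simp only [surplus_add_single, hjC, hkC, hjZ, hkZ, if_true, if_false] at h
  linarith

theorem IsGS.exists_surplus_add_surplus_le (hv : IsGS v) {p : Fin m → ℝ} {j k : Fin m}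
    (hjk : j ≠ k) {A C : Finset (Fin m)} (hA : InDemand v p A) (hjA : j ∈ A) (hkA : k ∈ A)
    (hjC : j ∉ C) (hkC : k ∉ C) (hC : ∀ X, j ∉ X → k ∉ X → surplus v p X ≤ surplus v p C) :
    ∃ T₁ T₂, j ∈ T₁ ∧ k ∉ T₁ ∧ k ∈ T₂ ∧ j ∉ T₂ ∧
      surplus v p A + surplus v p C ≤ surplus v p T₁ + surplus v p T₂ := by
  set u := surplus v p
  have huA : ∀ T, u T ≤ u A := hA
  obtain ⟨X, hX, hXmax⟩ := exists_max_image (univ.filter fun T => (j ∈ T ↔ k ∉ T)) u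
    ⟨{j}, by simp [hjk.symm]⟩
  simp only [mem_filter, mem_univ, true_and] at hX hXmax
  -- `t` is the largest common price increment on `j` and `k` at which `A` stays demanded
  set t := min ((u A - u C) / 2) (u A - u X)
  have ht₁ : t ≤ (u A - u C) / 2 := min_le_left _ _
  have ht₂ : t ≤ u A - u X := min_le_right _ _
  have hdem : InDemand v (p + Pi.single j t + Pi.single k t) A := by
    intro T
    change surplus v _ T ≤ surplus v _ A
    simp only [surplus_add_single, hjA, hkA, if_true]
    by_cases hjT : j ∈ T <;> by_cases hkT : k ∈ T <;> simp only [hjT, hkT, if_true, if_false]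
    · linarith [huA T]
    · linarith [hXmax T (by simp [hjT, hkT])]
    · linarith [hXmax T (by simp [hjT, hkT])]
    · linarith [hC T hjT hkT]
  have hdem' : InDemand v (p + Pi.single k t + Pi.single j t) A := by
    rwa [add_right_comm]
  obtain ⟨Z, hjZ, hkZ, hZ⟩ := hv.exists_surplus_add_le hjk hdem hjA hjC hkC
  obtain ⟨Z', hkZ', hjZ', hZ'⟩ := hv.exists_surplus_add_le hjk.symm hdem' hkA hkC hjC
  rcases min_choice ((u A - u C) / 2) (u A - u X) with ht | ht
  · exact ⟨Z, Z', hjZ, hkZ, hkZ', hjZ', by linarith⟩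
  · by_cases hjX : j ∈ X
    · exact ⟨X, Z', hjX, hX.1 hjX, hkZ', hjZ', by linarith⟩
    · exact ⟨Z, X, hjZ, hkZ, not_not.1 (mt hX.2 hjX), hjX, by linarith⟩

theorem indirectUtility_local_of_notMem_or_mem {p : Fin m → ℝ} {j k : Fin m} {δ ε : ℝ}
    (hδ : 0 ≤ δ) {A B : Finset (Fin m)} (hA : InDemand v p A)
    (hB : InDemand v (p + Pi.single j δ + Pi.single k ε) B) (h : j ∉ A ∨ j ∈ B) :
    indirectUtility v p + indirectUtility v (p + Pi.single j δ + Pi.single k ε) ≤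
      indirectUtility v (p + Pi.single j δ) + indirectUtility v (p + Pi.single k ε) := by
  have hBu := hB.indirectUtility_eq
  rw [hA.indirectUtility_eq]
  rw [add_right_comm] at hBu ⊢
  have hAj := surplus_le_indirectUtility v (p + Pi.single j δ) A
  rw [surplus_add_single] at hAj
  rcases h with hjA | hjB
  · simp only [hjA, if_false, sub_zero] at hAj
    linarith [indirectUtility_add_single_le v (p + Pi.single k ε) j hδ]
  · have hBk := surplus_le_indirectUtility v (p + Pi.single k ε) B
    rw [surplus_add_single, if_pos hjB] at hBu
    have : (if j ∈ A then δ else 0) ≤ δ := by split_ifs <;> linarith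
    linarith

theorem IsGS.isLocallySubmodular_indirectUtility (hv : IsGS v) :
    IsLocallySubmodular (indirectUtility v) := by
  intro p j k hjk δ ε hδ hε
  obtain ⟨A, hA⟩ := exists_inDemand v p
  obtain ⟨B, hB⟩ := exists_inDemand v (p + Pi.single j δ + Pi.single k ε)
  by_cases hj : j ∉ A ∨ j ∈ B
  · exact indirectUtility_local_of_notMem_or_mem hδ hA hB hj
  have hB' : InDemand v (p + Pi.single k ε + Pi.single j δ) B := by rwa [add_right_comm]
  by_cases hk : k ∉ A ∨ k ∈ B
  · have h := indirectUtility_local_of_notMem_or_mem hε hA hB' hk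
    rw [add_right_comm] at h
    linarith
  push Not at hj hk
  have hBu := hB.indirectUtility_eq
  simp only [surplus_add_single, hj.2, hk.2, if_false, sub_zero] at hBu
  have hC : ∀ X, j ∉ X → k ∉ X → surplus v p X ≤ surplus v p B := by
    intro X hjX hkX
    have h : surplus v _ X ≤ surplus v _ B := hB X
    simpa [surplus_add_single, hjX, hkX, hj.2, hk.2] using h
  obtain ⟨T₁, T₂, hjT₁, hkT₁, hkT₂, hjT₂, hT⟩ :=
    hv.exists_surplus_add_surplus_le hjk hA hj.1 hk.1 hj.2 hk.2 hC
  have h₁ := surplus_le_indirectUtility v (p + Pi.single k ε) T₁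
  have h₂ := surplus_le_indirectUtility v (p + Pi.single j δ) T₂
  rw [surplus_add_single, if_neg hkT₁, sub_zero] at h₁
  rw [surplus_add_single, if_neg hjT₂, sub_zero] at h₂
  rw [hA.indirectUtility_eq, hBu]
  linarith

end GrossSubstitutes

section Duality

variable {ι : Type*} {m : ℕ} (b : ι → Finset (Fin m) → ℝ) (K : Finset ι) (S : Finset (Fin m))

noncomputable def welfare : ℝ :=
  sSup {t : ℝ | ∃ X : ι → Finset (Fin m),
    (∀ k l, k ≠ l → Disjoint (X k) (X l)) ∧ (∀ k, X k ⊆ S) ∧ t = ∑ k ∈ K, b k (X k)}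

noncomputable def dualObjective (P : Fin m → ℝ) : ℝ :=
  ∑ k ∈ K, indirectUtility (b k) P + ∑ e ∈ S, P e

theorem sum_le_dualObjective {P : Fin m → ℝ} (hP : 0 ≤ P) {X : ι → Finset (Fin m)}
    (hX : ∀ k l, k ≠ l → Disjoint (X k) (X l)) (hXS : ∀ k, X k ⊆ S) :
    ∑ k ∈ K, b k (X k) ≤ dualObjective b K S P := by
  have hagent : ∀ k ∈ K, b k (X k) ≤ indirectUtility (b k) P + ∑ e ∈ X k, P e := fun k _ => by
    have h := surplus_le_indirectUtility (b k) P (X k)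
    rw [surplus] at h
    linarith
  have hprices : ∑ k ∈ K, ∑ e ∈ X k, P e ≤ ∑ e ∈ S, P e := by
    rw [← sum_biUnion fun k _ l _ hkl => hX k l hkl]
    exact sum_le_sum_of_subset_of_nonneg (biUnion_subset.2 fun k _ => hXS k) fun e _ _ => hP e
  calc ∑ k ∈ K, b k (X k)
      ≤ ∑ k ∈ K, (indirectUtility (b k) P + ∑ e ∈ X k, P e) := sum_le_sum hagent
    _ ≤ dualObjective b K S P := by rw [sum_add_distrib, dualObjective]; linarith

theorem welfare_le_dualObjective {P : Fin m → ℝ} (hP : 0 ≤ P) :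
    welfare b K S ≤ dualObjective b K S P :=
  csSup_le ⟨_, fun _ => ∅, fun _ _ _ => disjoint_empty_left _, fun _ => empty_subset S, rfl⟩
    fun _ ⟨_, hX, hXS, ht⟩ => ht ▸ sum_le_dualObjective b K S hP hX hXS

theorem sum_le_welfare {X : ι → Finset (Fin m)} (hX : ∀ k l, k ≠ l → Disjoint (X k) (X l))
    (hXS : ∀ k, X k ⊆ S) : ∑ k ∈ K, b k (X k) ≤ welfare b K S :=
  le_csSup ⟨dualObjective b K S 0, fun _ ⟨_, hX, hXS, ht⟩ =>
    ht ▸ sum_le_dualObjective b K S le_rfl hX hXS⟩ ⟨X, hX, hXS, rfl⟩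

variable {b K S}

theorem dualObjective_inf_add_dualObjective_sup_le {L : Finset ι} {T : Finset (Fin m)}
    (hb : ∀ k ∈ K, IsGS (b k)) (hKL : K ⊆ L) (hST : S ⊆ T) (P Q : Fin m → ℝ) :
    dualObjective b K T (P ⊓ Q) + dualObjective b L S (P ⊔ Q) ≤
      dualObjective b L T P + dualObjective b K S Q := by
  classical
  have hagents : ∑ k ∈ K, indirectUtility (b k) (P ⊓ Q) + ∑ k ∈ L, indirectUtility (b k) (P ⊔ Q)
      ≤ ∑ k ∈ L, indirectUtility (b k) P + ∑ k ∈ K, indirectUtility (b k) Q := by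
    rw [← sum_sdiff hKL (f := fun k => indirectUtility (b k) (P ⊔ Q)),
      ← sum_sdiff hKL (f := fun k => indirectUtility (b k) P)]
    have hK := sum_le_sum fun k hk =>
      (hb k hk).isLocallySubmodular_indirectUtility.inf_add_sup_le P Q
    have hLK := sum_le_sum fun k (_ : k ∈ L \ K) =>
      indirectUtility_antitone (b k) (le_sup_left : P ≤ P ⊔ Q)
    simp only [sum_add_distrib] at hK
    linarith
  have hprices : ∑ e ∈ T, (P ⊓ Q) e + ∑ e ∈ S, (P ⊔ Q) e ≤ ∑ e ∈ T, P e + ∑ e ∈ S, Q e := by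
    rw [← sum_sdiff hST (f := fun e => (P ⊓ Q) e), ← sum_sdiff hST (f := P)]
    have hTS : ∑ e ∈ T \ S, (P ⊓ Q) e ≤ ∑ e ∈ T \ S, P e :=
      sum_le_sum fun e _ => (inf_le_left : P ⊓ Q ≤ P) e
    have hS : ∑ e ∈ S, ((P ⊓ Q) e + (P ⊔ Q) e) = ∑ e ∈ S, (P e + Q e) :=
      sum_congr rfl fun e _ => min_add_max (P e) (Q e)
    simp only [sum_add_distrib] at hS
    linarith
  simp only [dualObjective]
  linarith

end Duality

namespace Auction

variable {m : ℕ}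

/-- Items outside `S` carry the reserve price `L`, which keeps them out of every demanded bundle. -/
def price (S : Finset (Fin m)) (L ε : ℝ) (ν : Fin m → ℕ) : Fin m → ℝ :=
  fun e => ε * ν e + if e ∈ S then 0 else L

/-- Prices seen by a bidder holding `A`: items outside `A` cost one increment more. -/
def bidderPrice (P : Fin m → ℝ) (ε : ℝ) (A : Finset (Fin m)) : Fin m → ℝ :=
  fun e => if e ∈ A then P e else P e + ε

theorem bidderPrice_add_of_subset (P : Fin m → ℝ) (ε : ℝ) {A D : Finset (Fin m)} (hAD : A ⊆ D) :
    bidderPrice (P + fun e => if e ∈ D \ A then ε else 0) ε D = bidderPrice P ε A := by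
  funext e
  by_cases heA : e ∈ A
  · simp [bidderPrice, heA, hAD heA]
  · by_cases heD : e ∈ D <;> simp [bidderPrice, heA, heD]

theorem bidderPrice_le_add (P : Fin m → ℝ) {ε : ℝ} (hε : 0 ≤ ε) (A D F : Finset (Fin m)) :
    bidderPrice P ε A ≤ bidderPrice (P + fun e => if e ∈ F then ε else 0) ε (A \ D) := by
  intro e
  simp only [bidderPrice, Pi.add_apply, mem_sdiff]
  split_ifs <;> grind

theorem bidderPrice_add_of_mem (P : Fin m → ℝ) (ε : ℝ) {A D F : Finset (Fin m)} (hFD : F ⊆ D)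
    {e : Fin m} (he : e ∈ A \ D) :
    bidderPrice (P + fun e => if e ∈ F then ε else 0) ε (A \ D) e = bidderPrice P ε A e := by
  have heF : e ∉ F := fun h => (mem_sdiff.1 he).2 (hFD h)
  simp [bidderPrice, he, heF, (mem_sdiff.1 he).1]

variable {ι : Type*} (b : ι → Finset (Fin m) → ℝ) (K : Finset ι) (S : Finset (Fin m)) (L ε : ℝ)

/-- An intermediate state of the ascending auction: `ν e` counts the price increments of `e`, and
`A k` is the bundle tentatively held by bidder `k`. -/
structure IsState (ν : Fin m → ℕ) (A : ι → Finset (Fin m)) : Prop where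
  eq_empty : ∀ k ∉ K, A k = ∅
  subset : ∀ k, A k ⊆ S
  disjoint : ∀ k l, k ≠ l → Disjoint (A k) (A l)
  count_eq_zero : ∀ e, (∀ k, e ∉ A k) → ν e = 0
  exists_inDemand : ∀ k ∈ K, ∃ D, A k ⊆ D ∧ InDemand (b k) (bidderPrice (price S L ε ν) ε (A k)) D

theorem isState_zero : IsState b K S L ε 0 fun _ => ∅ where
  eq_empty _ _ := rfl
  subset _ := empty_subset S
  disjoint _ _ _ := disjoint_empty_left _
  count_eq_zero _ _ := rfl
  exists_inDemand k _ := (exists_inDemand (b k) _).imp fun D hD => ⟨empty_subset D, hD⟩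

variable {b K S L ε}

theorem price_add_indicator (ν : Fin m → ℕ) (F : Finset (Fin m)) :
    price S L ε (ν + fun e => if e ∈ F then 1 else 0) =
      price S L ε ν + fun e => if e ∈ F then ε else 0 := by
  funext e
  simp only [price, Pi.add_apply]
  split_ifs <;> push_cast <;> ring

theorem sum_lt_sum_add_indicator (ν : Fin m → ℕ) {F : Finset (Fin m)} (hF : F.Nonempty) :
    ∑ e, ν e < ∑ e, (ν + fun e => if e ∈ F then 1 else 0 : Fin m → ℕ) e := by
  obtain ⟨e, he⟩ := hF
  have h := single_le_sum (f := fun e => if e ∈ F then 1 else 0) (fun _ _ => Nat.zero_le _)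
    (mem_univ e)
  simp only [he, if_true] at h
  simp only [Pi.add_apply, sum_add_distrib]
  omega

theorem IsState.subset_of_inDemand (hb : ∀ k ∈ K, IsGS (b k)) (hL : ∀ k ∈ K, b k univ ≤ L)
    (hε : 0 < ε) {ν : Fin m → ℕ} {A : ι → Finset (Fin m)} (hs : IsState b K S L ε ν A) {k : ι}
    (hk : k ∈ K) {D : Finset (Fin m)}
    (hD : InDemand (b k) (bidderPrice (price S L ε ν) ε (A k)) D) : D ⊆ S := by
  intro e he
  by_contra heS
  have h := hD.price_le_of_mem (hb k hk).1 he
  have heA : e ∉ A k := fun h => heS (hs.subset k h)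
  simp only [bidderPrice, price, heA, heS, if_false] at h
  linarith [hL k hk, mul_nonneg hε.le (Nat.cast_nonneg (α := ℝ) (ν e))]

theorem IsState.exists_inDemand_sdiff (hb : ∀ k ∈ K, IsGS (b k)) (hε : 0 ≤ ε) {ν : Fin m → ℕ}
    {A : ι → Finset (Fin m)} (hs : IsState b K S L ε ν A) {l : ι} (hl : l ∈ K)
    {D F : Finset (Fin m)} (hFD : F ⊆ D) :
    ∃ T, A l \ D ⊆ T ∧ InDemand (b l)
      (bidderPrice (price S L ε ν + fun e => if e ∈ F then ε else 0) ε (A l \ D)) T := by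
  obtain ⟨Dl, hADl, hDl⟩ := hs.exists_inDemand l hl
  obtain ⟨T, hT, hret⟩ := (hb l hl).2 _ _ (bidderPrice_le_add (price S L ε ν) hε (A l) D F) Dl hDl
  exact ⟨T, fun e he => hret e (hADl (mem_sdiff.1 he).1) (bidderPrice_add_of_mem _ _ hFD he).symm,
    hT⟩

/-- One round of the auction: bidder `k` takes a demanded superset `D` of its bundle, the newly
taken items `D \ A k` go up by one increment, and the other bidders lose `D`. -/
theorem IsState.exists_step [DecidableEq ι] (hb : ∀ k ∈ K, IsGS (b k))
    (hL : ∀ k ∈ K, b k univ ≤ L) (hε : 0 < ε) {ν : Fin m → ℕ} {A : ι → Finset (Fin m)}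
    (hs : IsState b K S L ε ν A) {k : ι} (hk : k ∈ K) {D : Finset (Fin m)} (hAD : A k ⊆ D)
    (hD : InDemand (b k) (bidderPrice (price S L ε ν) ε (A k)) D) (hne : A k ≠ D) :
    ∃ ν' A', IsState b K S L ε ν' A' ∧ ∑ e, ν e < ∑ e, ν' e := by
  set F := D \ A k
  have hDS := hs.subset_of_inDemand hb hL hε hk hD
  refine ⟨ν + fun e => if e ∈ F then 1 else 0, Function.update (fun l => A l \ D) k D,
    ⟨fun l hl => ?_, fun l => ?_, fun l l' hll' => ?_, fun e he => ?_, fun l hl => ?_⟩, ?_⟩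
  · have hlk : l ≠ k := ne_of_mem_of_not_mem hk hl |>.symm
    simp [Function.update_of_ne hlk, hs.eq_empty l hl]
  · by_cases hlk : l = k
    · simpa [hlk] using hDS
    · simpa [Function.update_of_ne hlk] using sdiff_subset.trans (hs.subset l)
  · by_cases hlk : l = k <;> by_cases hl'k : l' = k
    · exact absurd (hlk.trans hl'k.symm) hll'
    · simpa [hlk, Function.update_of_ne hl'k] using disjoint_sdiff
    · simpa [hl'k, Function.update_of_ne hlk] using sdiff_disjoint
    · simpa [Function.update_of_ne hlk, Function.update_of_ne hl'k] using
        (hs.disjoint l l' hll').mono sdiff_subset sdiff_subset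
  · have heD : e ∉ D := by simpa using he k
    have heF : e ∉ F := fun h => heD (mem_sdiff.1 h).1
    simp only [Pi.add_apply, heF, if_false, add_zero]
    refine hs.count_eq_zero e fun l hel => ?_
    by_cases hlk : l = k
    · exact heD (hAD (hlk ▸ hel))
    · simpa [Function.update_of_ne hlk, hel, heD] using he l
  · rw [price_add_indicator]
    by_cases hlk : l = k
    · subst hlk
      refine ⟨D, by simp, ?_⟩
      rwa [Function.update_self, bidderPrice_add_of_subset _ _ hAD]
    · simpa [Function.update_of_ne hlk] using hs.exists_inDemand_sdiff hb hε.le hl sdiff_subset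
  · exact sum_lt_sum_add_indicator ν (sdiff_nonempty.2 fun h => hne (subset_antisymm hAD h))

theorem IsState.mul_count_le (hb : ∀ k ∈ K, IsGS (b k)) (hL : ∀ k ∈ K, b k univ ≤ L)
    (hL₀ : 0 ≤ L) {ν : Fin m → ℕ} {A : ι → Finset (Fin m)} (hs : IsState b K S L ε ν A)
    (e : Fin m) : ε * ν e ≤ L := by
  by_cases hown : ∃ k, e ∈ A k
  · obtain ⟨k, hek⟩ := hown
    have hk : k ∈ K := by_contra fun hk => by simp [hs.eq_empty k hk] at hek
    obtain ⟨D, hAD, hD⟩ := hs.exists_inDemand k hk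
    have h := hD.price_le_of_mem (hb k hk).1 (hAD hek)
    simp only [bidderPrice, price, hek, hs.subset k hek, if_true, add_zero] at h
    exact h.trans (hL k hk)
  · simpa [hs.count_eq_zero e (not_exists.1 hown)] using hL₀

/-- The ascending auction terminates: the total count of increments strictly grows in each round
and is bounded, since no bidder pays more than `L` for an item. -/
theorem exists_isState_forall_inDemand [DecidableEq ι] (hb : ∀ k ∈ K, IsGS (b k))
    (hL : ∀ k ∈ K, b k univ ≤ L) (hL₀ : 0 ≤ L) (hε : 0 < ε) :
    ∃ ν A, IsState b K S L ε ν A ∧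
      ∀ k ∈ K, InDemand (b k) (bidderPrice (price S L ε ν) ε (A k)) (A k) := by
  by_contra! hstuck
  have hgrow : ∀ d : ℕ, ∃ ν A, IsState b K S L ε ν A ∧ d ≤ ∑ e, ν e := by
    intro d
    induction d with
    | zero => exact ⟨0, _, isState_zero b K S L ε, Nat.zero_le _⟩
    | succ d ih =>
      obtain ⟨ν, A, hs, hd⟩ := ih
      obtain ⟨k, hk, hnot⟩ := hstuck ν A hs
      obtain ⟨D, hAD, hD⟩ := hs.exists_inDemand k hk
      obtain ⟨ν', A', hs', hlt⟩ :=
        hs.exists_step hb hL hε hk hAD hD fun h => hnot (h ▸ hD)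
      exact ⟨ν', A', hs', by omega⟩
  set N := ⌈L / ε⌉₊
  obtain ⟨ν, A, hs, hd⟩ := hgrow (m * N + 1)
  have hbound : ∀ e, ν e ≤ N := fun e => by
    have h : (ν e : ℝ) ≤ L / ε := by
      rw [le_div_iff₀ hε, mul_comm]
      exact hs.mul_count_le hb hL hL₀ e
    exact_mod_cast h.trans (Nat.le_ceil _)
  have hsum : ∑ e, ν e ≤ m * N := by
    simpa using sum_le_sum fun e (_ : e ∈ univ) => hbound e
  omega

end Auction

theorem exists_dualObjective_le_welfare_add {ι : Type*} [DecidableEq ι] {m : ℕ}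
    {b : ι → Finset (Fin m) → ℝ} {K : Finset ι} (hb : ∀ k ∈ K, IsGS (b k)) (S : Finset (Fin m))
    {δ : ℝ} (hδ : 0 < δ) : ∃ P, 0 ≤ P ∧ dualObjective b K S P ≤ welfare b K S + δ := by
  set L := ∑ k ∈ K, b k univ
  have hL : ∀ k ∈ K, b k univ ≤ L := fun k hk =>
    single_le_sum (fun l hl => (hb l hl).1.2.2 univ) hk
  have hL₀ : 0 ≤ L := sum_nonneg fun k hk => (hb k hk).1.2.2 univ
  set ε := δ / (K.card * m + 1)
  have hε : 0 < ε := by positivity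
  have hεδ : ε * (K.card * m) ≤ δ := by
    rw [div_mul_eq_mul_div, div_le_iff₀ (by positivity)]
    nlinarith
  obtain ⟨ν, A, hs, hA⟩ := Auction.exists_isState_forall_inDemand (S := S) hb hL hL₀ hε
  set P := Auction.price S L ε ν
  refine ⟨P, fun e => by simp only [P, Auction.price]; split_ifs <;> positivity, ?_⟩
  have hagent : ∀ k ∈ K, indirectUtility (b k) P ≤ b k (A k) - ∑ e ∈ A k, P e + ε * m := by
    intro k hk
    have h := indirectUtility_le_add_of_le_add (b k) hε.le
      (P := P) (q := Auction.bidderPrice P ε (A k)) fun e => by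
        simp only [Auction.bidderPrice]; split_ifs <;> linarith
    have hAk : ∑ e ∈ A k, Auction.bidderPrice P ε (A k) e = ∑ e ∈ A k, P e :=
      sum_congr rfl fun e he => if_pos he
    rwa [(hA k hk).indirectUtility_eq, surplus, hAk] at h
  -- unsold items have price zero
  have hprices : ∑ e ∈ S, P e = ∑ k ∈ K, ∑ e ∈ A k, P e := by
    rw [← sum_biUnion fun k _ l _ hkl => hs.disjoint k l hkl]
    refine (sum_subset (biUnion_subset.2 fun k _ => hs.subset k) fun e heS hnot => ?_).symm
    have hν : ν e = 0 := hs.count_eq_zero e fun k hek => by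
      by_cases hk : k ∈ K
      · exact hnot (mem_biUnion.2 ⟨k, hk, hek⟩)
      · simp [hs.eq_empty k hk] at hek
    simp [P, Auction.price, heS, hν]
  calc dualObjective b K S P
      ≤ ∑ k ∈ K, (b k (A k) - ∑ e ∈ A k, P e + ε * m) + ∑ e ∈ S, P e :=
        add_le_add_left (sum_le_sum hagent) _
    _ = ∑ k ∈ K, b k (A k) + ε * (K.card * m) := by
        rw [hprices, sum_add_distrib, sum_sub_distrib, sum_const, nsmul_eq_mul]
        ring
    _ ≤ welfare b K S + δ := add_le_add (sum_le_welfare b K S hs.disjoint hs.subset) hεδ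

/-- for GS bids, the marginal welfare of a set `x` with respect to the other
agents is at most its marginal welfare with respect to all agents. -/
theorem stmt12 {n m : ℕ} (b : Fin n → Finset (Fin m) → ℝ) (hb : ∀ i, IsGS (b i))
    (i : Fin n) (x : Finset (Fin m)) :
    Wminus b i Finset.univ - Wminus b i (Finset.univ \ x) ≤
      W b Finset.univ - W b (Finset.univ \ x) := by
  change welfare b (univ.erase i) univ - welfare b (univ.erase i) (univ \ x) ≤
    welfare b univ univ - welfare b univ (univ \ x)
  suffices h : ∀ δ > 0, welfare b (univ.erase i) univ + welfare b univ (univ \ x) ≤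
      welfare b univ univ + welfare b (univ.erase i) (univ \ x) + (δ + δ) by
    linarith [le_of_forall_pos_le_add fun ε hε => by simpa using h (ε / 2) (half_pos hε)]
  intro δ hδ
  obtain ⟨P, hP, hPW⟩ := exists_dualObjective_le_welfare_add (K := univ) (fun k _ => hb k) univ hδ
  obtain ⟨Q, hQ, hQW⟩ :=
    exists_dualObjective_le_welfare_add (K := univ.erase i) (fun k _ => hb k) (univ \ x) hδ
  have hsub := dualObjective_inf_add_dualObjective_sup_le (fun k _ => hb k)
    (erase_subset i univ) (subset_univ (univ \ x)) P Q
  have h₁ := welfare_le_dualObjective b (univ.erase i) univ (le_inf hP hQ)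
  have h₂ := welfare_le_dualObjective b univ (univ \ x) (hP.trans (le_sup_left : P ≤ P ⊔ Q))
  linarith
end

section
/- (Miscoordination example; PoA_0 ≥ 2 for the English Walrasian mechanism.) Let n = 2 agents and m = 2 items A and B, and fix 0 < ε < 1. Define unit-demand valuations v_1(S) = max_{j∈S} w^1_j with w^1_A = 2−ε, w^1_B = 1, and v_2(S) = max_{j∈S} w^2_j with w^2_A = 1, w^2_B = 2−ε. Define bids b_1(S) = 1 if B ∈ S else 0, and b_2(S) = 1 if A ∈ S else 0. Then for every English Walrasian mechanism with bid space equal to the GS valuations, the profile (b_1, b_2) is a pure Nash equilibrium for (v_1, v_2) in which both bids are non-exposure bids; the equilibrium allocation assigns B to agent 1 and A to agent 2, with welfare ∑_i v_i(X_i(b)) = 2, while OPT(v) = 4 − 2ε. -/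
open Finset

/-- A unit-demand valuation with weight vector `w`. -/
noncomputable def unitDemand {m : ℕ} (w : Fin m → ℝ) : Finset (Fin m) → ℝ :=
  fun S => if h : S.Nonempty then S.sup' h w else 0

/-- Miscoordinated bid of agent 1: 1 on sets containing item B (index 1), else 0. -/
noncomputable def misB1 : Finset (Fin 2) → ℝ := fun S => if (1 : Fin 2) ∈ S then 1 else 0

/-- Miscoordinated bid of agent 2: 1 on sets containing item A (index 0), else 0. -/
noncomputable def misB2 : Finset (Fin 2) → ℝ := fun S => if (0 : Fin 2) ∈ S then 1 else 0

/-!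
Each miscoordinated bid is additive, hence gross substitutes, and is worth 1 on exactly one
item `j`. With two agents, the minimum Walrasian price `W(𝟙 + e_l) - W(𝟙)` of an item `l` is at
most the largest loss one fixed agent can suffer when `l` is removed from its bundle; so next to
a bid on `j` every item other than `j` costs 0 and `j` costs at most 1. Conversely, if `j` is
allocated to the other agent, giving the `j`-bidder an extra copy of `j` raises the declared
welfare by 1, so `j` costs at least 1. At the miscoordinated profile each agent therefore gets
its low-value item for free (utility 1), while any deviation either avoids the opponent's item
(value at most 1) or pays at least 1 for it (utility at most `1 - ε`). An agent bidding on `j`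
pays at most 1, and only when it wins `j`, which it values at least 1: no exposure.
-/

noncomputable def walrasianPrice {n m : ℕ} (b : Fin n → Finset (Fin m) → ℝ) (j : Fin m) : ℝ :=
  Wmult b (fun k => if k = j then 2 else 1) - Wmult b (fun _ => 1)

def itemCount {n m : ℕ} (X : Fin n → Finset (Fin m)) (j : Fin m) : ℕ :=
  (Finset.univ.filter fun i => j ∈ X i).card

noncomputable def indicatorBid {m : ℕ} (j : Fin m) : Finset (Fin m) → ℝ :=
  fun S => if j ∈ S then 1 else 0

section Additive

variable {m : ℕ}

theorem inDemand_sum_iff (w p : Fin m → ℝ) (S : Finset (Fin m)) :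
    InDemand (fun T => ∑ l ∈ T, w l) p S ↔ (∀ l ∈ S, p l ≤ w l) ∧ ∀ l ∉ S, w l ≤ p l := by
  simp only [InDemand, ← sum_sub_distrib]
  constructor
  · intro h
    refine ⟨fun l hl => ?_, fun l hl => ?_⟩
    · have := h (S.erase l)
      rw [← add_sum_erase S _ hl] at this
      linarith
    · have := h (insert l S)
      rw [sum_insert hl] at this
      linarith
  · rintro ⟨hin, hout⟩ U
    calc ∑ l ∈ U, (w l - p l)
        = ∑ l ∈ U with l ∈ S, (w l - p l) + ∑ l ∈ U with l ∉ S, (w l - p l) :=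
          (sum_filter_add_sum_filter_not U _ _).symm
      _ ≤ ∑ l ∈ U with l ∈ S, (w l - p l) + 0 := by
          gcongr
          exact sum_nonpos fun l hl => by linarith [hout l (mem_filter.1 hl).2]
      _ ≤ ∑ l ∈ S, (w l - p l) := by
          rw [add_zero]
          exact sum_le_sum_of_subset_of_nonneg (fun l hl => (mem_filter.1 hl).2)
            fun l hl _ => by linarith [hin l hl]

theorem IsAdditive.isValuation {v : Finset (Fin m) → ℝ} (hv : IsAdditive v) : IsValuation v := by
  obtain ⟨w, hw, hv⟩ := hv
  refine ⟨by simp [hv], fun S T hST => ?_, fun S => ?_⟩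
  · rw [hv, hv]
    exact sum_le_sum_of_subset_of_nonneg hST fun l _ _ => hw l
  · rw [hv]
    exact sum_nonneg fun l _ => hw l

theorem IsAdditive.isGS {v : Finset (Fin m) → ℝ} (hv : IsAdditive v) : IsGS v := by
  refine ⟨hv.isValuation, fun p q hpq S hS => ?_⟩
  obtain ⟨w, -, hv⟩ := hv
  obtain rfl : v = fun T => ∑ l ∈ T, w l := funext hv
  rw [inDemand_sum_iff] at hS
  refine ⟨S.filter fun l => q l ≤ w l, (inDemand_sum_iff w q _).2
    ⟨fun l hl => (mem_filter.1 hl).2, fun l hl => ?_⟩,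
    fun l hl hpql => mem_filter.2 ⟨hl, hpql ▸ hS.1 l hl⟩⟩
  by_cases hlS : l ∈ S
  · exact (not_le.1 fun h => hl (mem_filter.2 ⟨hlS, h⟩)).le
  · exact (hS.2 l hlS).trans (hpq l)

theorem indicatorBid_isAdditive (j : Fin m) : IsAdditive (indicatorBid j) :=
  ⟨Pi.single j 1, fun l => by by_cases h : l = j <;> simp [h],
    fun S => by simp [indicatorBid, sum_pi_single']⟩

theorem indicatorBid_le_one (j : Fin m) (S : Finset (Fin m)) : indicatorBid j S ≤ 1 := by
  unfold indicatorBid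
  split_ifs <;> norm_num

theorem indicatorBid_le_erase_add (j l : Fin m) (S : Finset (Fin m)) :
    indicatorBid j S ≤ indicatorBid j (S.erase l) + if l = j then 1 else 0 := by
  by_cases hl : l = j
  · subst hl
    unfold indicatorBid
    split_ifs <;> simp_all
  · simp [indicatorBid, hl, Ne.symm hl]

end Additive

theorem sum_apply_update {ι α M : Type*} [Fintype ι] [DecidableEq ι] [AddCommMonoid M]
    (f : ι → α → M) (X : ι → α) (i : ι) (S : α) :
    ∑ a, f a (Function.update X i S a) + f i (X i) = ∑ a, f a (X a) + f i S := by
  rw [Fintype.sum_eq_add_sum_compl i, Fintype.sum_eq_add_sum_compl i fun a => f a (X a),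
    Function.update_self, sum_congr rfl fun a ha => by
      rw [Function.update_of_ne (by simpa using ha)]]
  abel

section Welfare

variable {n m : ℕ} (b : Fin n → Finset (Fin m) → ℝ)

theorem itemCount_update (X : Fin n → Finset (Fin m)) (i : Fin n) (S : Finset (Fin m))
    (l : Fin m) :
    itemCount (Function.update X i S) l + (if l ∈ X i then 1 else 0) =
      itemCount X l + if l ∈ S then 1 else 0 := by
  simpa only [itemCount, card_filter] using
    sum_apply_update (fun _ T => if l ∈ T then 1 else 0) X i S

theorem forall_itemCount_le_one_iff (X : Fin n → Finset (Fin m)) :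
    (∀ l, itemCount X l ≤ 1) ↔ ∀ a c, a ≠ c → Disjoint (X a) (X c) := by
  simp only [itemCount, card_le_one, mem_filter, mem_univ, true_and, disjoint_left]
  exact ⟨fun h a c hac l ha hc => hac (h l a ha c hc),
    fun h l a ha c hc => by_contra fun hac => h a c hac ha hc⟩

theorem le_Wmult {x : Fin m → ℕ} {X : Fin n → Finset (Fin m)} (hX : ∀ j, itemCount X j ≤ x j) :
    ∑ i, b i (X i) ≤ Wmult b x :=
  le_csSup ((Set.finite_range fun X : Fin n → Finset (Fin m) => ∑ i, b i (X i)).subset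
    (by rintro _ ⟨X, -, rfl⟩; exact ⟨X, rfl⟩)).bddAbove ⟨X, hX, rfl⟩

theorem Wmult_le {x : Fin m → ℕ} {c : ℝ}
    (h : ∀ X : Fin n → Finset (Fin m), (∀ j, itemCount X j ≤ x j) → ∑ i, b i (X i) ≤ c) :
    Wmult b x ≤ c :=
  csSup_le ⟨_, fun _ => ∅, by simp, rfl⟩ (by rintro _ ⟨X, hX, rfl⟩; exact h X hX)

theorem Wmult_mono {x y : Fin m → ℕ} (hxy : x ≤ y) : Wmult b x ≤ Wmult b y :=
  Wmult_le b fun _ hX => le_Wmult b fun j => (hX j).trans (hxy j)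

theorem le_W {X : Fin n → Finset (Fin m)} (hX : ∀ a c, a ≠ c → Disjoint (X a) (X c)) :
    ∑ i, b i (X i) ≤ W b univ :=
  le_csSup ((Set.finite_range fun X : Fin n → Finset (Fin m) => ∑ i, b i (X i)).subset
    (by rintro _ ⟨X, -, -, rfl⟩; exact ⟨X, rfl⟩)).bddAbove ⟨X, hX, fun _ => subset_univ _, rfl⟩

theorem W_le {c : ℝ} (h : ∀ X : Fin n → Finset (Fin m),
      (∀ a c, a ≠ c → Disjoint (X a) (X c)) → ∑ i, b i (X i) ≤ c) :
    W b univ ≤ c :=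
  csSup_le ⟨_, fun _ => ∅, by simp, by simp, rfl⟩ (by rintro _ ⟨X, hX, -, rfl⟩; exact h X hX)

theorem Wmult_one_le_W : Wmult b (fun _ => 1) ≤ W b univ :=
  Wmult_le b fun X hX => le_W b ((forall_itemCount_le_one_iff X).1 hX)

theorem walrasianPrice_nonneg (j : Fin m) : 0 ≤ walrasianPrice b j :=
  sub_nonneg.2 (Wmult_mono b fun k => by split_ifs <;> norm_num)

theorem sub_le_walrasianPrice {Y : Fin n → Finset (Fin m)}
    (hY : ∀ a c, a ≠ c → Disjoint (Y a) (Y c)) (hopt : ∑ i, b i (Y i) = W b univ)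
    (k : Fin n) (j : Fin m) :
    b k (insert j (Y k)) - b k (Y k) ≤ walrasianPrice b j := by
  have hcount : ∀ l, itemCount (Function.update Y k (insert j (Y k))) l ≤
      if l = j then 2 else 1 := by
    intro l
    have h1 := (forall_itemCount_le_one_iff Y).2 hY l
    have h2 := itemCount_update Y k (insert j (Y k)) l
    by_cases hl : l = j
    · subst hl
      simp only [mem_insert_self, if_true] at h2 ⊢
      split_ifs at h2 <;> omega
    · simp only [hl, mem_insert, false_or, if_false] at h2 ⊢
      omega
  have := le_Wmult b hcount
  have := sum_apply_update b Y k (insert j (Y k))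
  have := Wmult_one_le_W b
  unfold walrasianPrice
  linarith

end Welfare

section TwoAgents

variable {m : ℕ}

/- With two agents an item used twice lies in both bundles, so the extra copy of `j` can always
be taken from agent `i`. -/
theorem walrasianPrice_le (b : Fin 2 → Finset (Fin m) → ℝ) {i : Fin 2} {j : Fin m} {c : ℝ}
    (h : ∀ S, b i S ≤ b i (S.erase j) + c) : walrasianPrice b j ≤ c := by
  suffices Wmult b (fun k => if k = j then 2 else 1) ≤ Wmult b (fun _ => 1) + c by
    unfold walrasianPrice
    linarith
  refine Wmult_le b fun X hX => ?_
  by_cases hj : j ∈ X i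
  · have hX' : ∀ l, itemCount (Function.update X i ((X i).erase j)) l ≤ 1 := by
      intro l
      have h1 := hX l
      have h2 := itemCount_update X i ((X i).erase j) l
      by_cases hl : l = j
      · subst hl
        simp only [hj, mem_erase, ne_eq, not_true_eq_false, false_and, if_true,
          if_false] at h1 h2 ⊢
        omega
      · simp only [hl, mem_erase, ne_eq, not_false_eq_true, true_and, if_false] at h1 h2 ⊢
        split_ifs at h2 <;> omega
    have := le_Wmult b hX'
    have := sum_apply_update b X i ((X i).erase j)
    have := h (X i)
    linarith
  · have hX1 : ∀ l, itemCount X l ≤ 1 := by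
      intro l
      by_cases hl : l = j
      · subst hl
        calc itemCount X l ≤ (univ.erase i).card := card_le_card fun a ha =>
              mem_erase.2 ⟨by rintro rfl; exact hj (mem_filter.1 ha).2, mem_univ _⟩
          _ = 1 := by simp
      · simpa [hl] using hX l
    have := le_Wmult b hX1
    have : 0 ≤ c := by simpa using h ∅
    linarith

theorem walrasianPrice_le_of_indicatorBid (b : Fin 2 → Finset (Fin m) → ℝ) {i : Fin 2}
    {j : Fin m} (hi : b i = indicatorBid j) (l : Fin m) :
    walrasianPrice b l ≤ if l = j then 1 else 0 :=
  walrasianPrice_le b fun S => hi ▸ indicatorBid_le_erase_add j l S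

end TwoAgents

section English

variable {n m : ℕ} {B : Set (Finset (Fin m) → ℝ)} {M : Mechanism n m}
  {b : Fin n → Finset (Fin m) → ℝ}

theorem InBidSpace.update (hb : InBidSpace B b) {bi : Finset (Fin m) → ℝ} (hbi : bi ∈ B)
    (i : Fin n) : InBidSpace B (Function.update b i bi) := by
  intro a
  rcases eq_or_ne a i with rfl | h
  · simpa using hbi
  · simpa [Function.update_of_ne h] using hb a

theorem IsEnglish.pay_eq (hM : IsEnglish M B) (hb : InBidSpace B b) (i : Fin n) :
    M.pay b i = ∑ j ∈ M.alloc b i, walrasianPrice b j :=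
  hM.2 b hb i

theorem IsEnglish.pay_nonneg (hM : IsEnglish M B) (hb : InBidSpace B b) (i : Fin n) :
    0 ≤ M.pay b i := by
  rw [hM.pay_eq hb]
  exact sum_nonneg fun j _ => walrasianPrice_nonneg b j

theorem IsEnglish.walrasianPrice_le_pay (hM : IsEnglish M B) (hb : InBidSpace B b) {i : Fin n}
    {j : Fin m} (hj : j ∈ M.alloc b i) : walrasianPrice b j ≤ M.pay b i := by
  rw [hM.pay_eq hb]
  exact single_le_sum (fun l _ => walrasianPrice_nonneg b l) hj

theorem IsEnglish.one_le_walrasianPrice (hM : IsEnglish M B) (hb : InBidSpace B b)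
    (hdisj : AllocDisjoint M B) {i k : Fin n} (hik : i ≠ k) {j : Fin m}
    (hk : b k = indicatorBid j) (hj : j ∈ M.alloc b i) : 1 ≤ walrasianPrice b j := by
  have hjk : j ∉ M.alloc b k := disjoint_left.1 (hdisj b hb i k hik) hj
  simpa [hk, indicatorBid, hjk] using sub_le_walrasianPrice b (hdisj b hb) (hM.1 b hb) k j

theorem IsEnglish.util_le_of_indicatorBid_opponent (hM : IsEnglish M B) (hb : InBidSpace B b)
    (hdisj : AllocDisjoint M B) {i k : Fin n} (hik : i ≠ k) {j : Fin m}
    (hk : b k = indicatorBid j) {v : Finset (Fin m) → ℝ} {u : ℝ}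
    (hout : ∀ S, j ∉ S → v S ≤ u) (hin : ∀ S, j ∈ S → v S ≤ u + 1) :
    util M v i b ≤ u := by
  unfold util
  by_cases hj : j ∈ M.alloc b i
  · linarith [hin _ hj, hM.one_le_walrasianPrice hb hdisj hik hk hj,
      hM.walrasianPrice_le_pay hb hj]
  · linarith [hout _ hj, hM.pay_nonneg hb i]

end English

section EnglishTwoAgents

variable {m : ℕ} {B : Set (Finset (Fin m) → ℝ)} {M : Mechanism 2 m}

theorem IsEnglish.pay_le_of_indicatorBid (hM : IsEnglish M B) {b : Fin 2 → Finset (Fin m) → ℝ}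
    (hb : InBidSpace B b) {i : Fin 2} {j : Fin m} (hi : b i = indicatorBid j) :
    M.pay b i ≤ if j ∈ M.alloc b i then 1 else 0 := by
  rw [hM.pay_eq hb, ← sum_ite_eq' (M.alloc b i) j fun _ => (1 : ℝ)]
  exact sum_le_sum fun l _ => walrasianPrice_le_of_indicatorBid b hi l

theorem IsEnglish.hasExposureFactor_zero_of_indicatorBid (hM : IsEnglish M B)
    {v : Finset (Fin m) → ℝ} (hv : ∀ S, 0 ≤ v S) {j : Fin m} (hvj : ∀ S, j ∈ S → 1 ≤ v S)
    (i : Fin 2) : HasExposureFactor M B v i (indicatorBid j) 0 := by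
  intro b hb hi
  rw [add_zero, one_mul]
  refine (hM.pay_le_of_indicatorBid hb hi).trans ?_
  split_ifs with h
  exacts [hvj _ h, hv _]

theorem IsEnglish.util_update_le (hM : IsEnglish M B) (hdisj : AllocDisjoint M B)
    {b : Fin 2 → Finset (Fin m) → ℝ} (hb : InBidSpace B b) {i k : Fin 2} (hik : i ≠ k)
    {j l : Fin m} (hk : b k = indicatorBid j) (hl : M.alloc b i = {l}) (hlj : l ≠ j)
    {v : Finset (Fin m) → ℝ} (hout : ∀ S, j ∉ S → v S ≤ v {l})
    (hin : ∀ S, j ∈ S → v S ≤ v {l} + 1) {bi : Finset (Fin m) → ℝ} (hbi : bi ∈ B) :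
    util M v i (Function.update b i bi) ≤ util M v i b :=
  calc util M v i (Function.update b i bi) ≤ v {l} :=
        hM.util_le_of_indicatorBid_opponent (hb.update hbi i) hdisj hik
          (by rwa [Function.update_of_ne hik.symm]) hout hin
    _ ≤ util M v i b := by
        have := walrasianPrice_le_of_indicatorBid b hk l
        rw [if_neg hlj] at this
        rw [util, hM.pay_eq hb, hl, sum_singleton]
        linarith

end EnglishTwoAgents

section UnitDemand

variable {m : ℕ} (w : Fin m → ℝ)

theorem unitDemand_singleton (j : Fin m) : unitDemand w {j} = w j := by
  simp [unitDemand]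

theorem le_unitDemand {S : Finset (Fin m)} {j : Fin m} (hj : j ∈ S) : w j ≤ unitDemand w S := by
  rw [unitDemand, dif_pos ⟨j, hj⟩]
  exact le_sup' w hj

theorem unitDemand_le {S : Finset (Fin m)} {c : ℝ} (hc : 0 ≤ c) (h : ∀ j ∈ S, w j ≤ c) :
    unitDemand w S ≤ c := by
  unfold unitDemand
  split_ifs with hS
  exacts [sup'_le hS w h, hc]

theorem unitDemand_nonneg (hw : ∀ j, 0 ≤ w j) (S : Finset (Fin m)) : 0 ≤ unitDemand w S := by
  obtain rfl | ⟨j, hj⟩ := S.eq_empty_or_nonempty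
  · simp [unitDemand]
  · exact (hw j).trans (le_unitDemand w hj)

variable {B : Set (Finset (Fin m) → ℝ)} {M : Mechanism 2 m}

theorem IsEnglish.unitDemand_util_update_le (hM : IsEnglish M B) (hdisj : AllocDisjoint M B)
    {b : Fin 2 → Finset (Fin m) → ℝ} (hb : InBidSpace B b) {i k : Fin 2} (hik : i ≠ k)
    {j l : Fin m} (hk : b k = indicatorBid j) (hl : M.alloc b i = {l}) (hlj : l ≠ j)
    (hwl : 0 ≤ w l) (hw : ∀ j' ≠ j, w j' ≤ w l) (hwj : w j ≤ w l + 1)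
    {bi : Finset (Fin m) → ℝ} (hbi : bi ∈ B) :
    util M (unitDemand w) i (Function.update b i bi) ≤ util M (unitDemand w) i b := by
  refine hM.util_update_le hdisj hb hik hk hl hlj (fun S hS => ?_) (fun S _ => ?_) hbi
  · rw [unitDemand_singleton]
    exact unitDemand_le w hwl fun j' hj' => hw j' (ne_of_mem_of_not_mem hj' hS)
  · rw [unitDemand_singleton]
    refine unitDemand_le w (by linarith) fun j' _ => ?_
    rcases eq_or_ne j' j with rfl | hj'
    exacts [hwj, by linarith [hw j' hj']]

theorem IsEnglish.unitDemand_hasExposureFactor_zero (hM : IsEnglish M B)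
    (hw : ∀ j, 0 ≤ w j) {j : Fin m} (hwj : 1 ≤ w j) (i : Fin 2) :
    HasExposureFactor M B (unitDemand w) i (indicatorBid j) 0 :=
  hM.hasExposureFactor_zero_of_indicatorBid (unitDemand_nonneg w hw)
    (fun _ hS => hwj.trans (le_unitDemand w hS)) i

end UnitDemand

theorem W_misB : W ![misB1, misB2] univ = 2 := by
  refine le_antisymm (W_le _ fun X _ => ?_) ?_
  · have h0 : misB1 (X 0) ≤ 1 := indicatorBid_le_one 1 _
    have h1 : misB2 (X 1) ≤ 1 := indicatorBid_le_one 0 _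
    rw [Fin.sum_univ_two]
    exact (add_le_add h0 h1).trans_eq one_add_one_eq_two
  · simpa [Fin.sum_univ_two, misB1, misB2, one_add_one_eq_two] using
      le_W ![misB1, misB2] (X := ![{1}, {0}]) (by decide)

theorem IsEnglish.alloc_misB {B : Set (Finset (Fin 2) → ℝ)} {M : Mechanism 2 2}
    (hM : IsEnglish M B) (hdisj : AllocDisjoint M B) (hb : InBidSpace B ![misB1, misB2]) :
    M.alloc ![misB1, misB2] 0 = {1} ∧ M.alloc ![misB1, misB2] 1 = {0} := by
  have hsum : misB1 (M.alloc ![misB1, misB2] 0) + misB2 (M.alloc ![misB1, misB2] 1) = 2 := by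
    rw [← W_misB, ← hM.1 _ hb, Fin.sum_univ_two]
    rfl
  have hmem0 : 1 ∈ M.alloc ![misB1, misB2] 0 := by
    by_contra h
    have h0 : misB1 (M.alloc ![misB1, misB2] 0) = 0 := if_neg h
    have h1 : misB2 (M.alloc ![misB1, misB2] 1) ≤ 1 := indicatorBid_le_one 0 _
    linarith
  have hmem1 : 0 ∈ M.alloc ![misB1, misB2] 1 := by
    by_contra h
    have h0 : misB1 (M.alloc ![misB1, misB2] 0) ≤ 1 := indicatorBid_le_one 1 _
    have h1 : misB2 (M.alloc ![misB1, misB2] 1) = 0 := if_neg h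
    linarith
  have key : ∀ S T : Finset (Fin 2), Disjoint S T → 1 ∈ S → 0 ∈ T → S = {1} ∧ T = {0} := by
    decide
  exact key _ _ (hdisj _ hb 0 1 (by decide)) hmem0 hmem1

theorem OPT_miscoordination {ε : ℝ} (hε1 : ε ≤ 1) :
    OPT ![unitDemand ![2 - ε, 1], unitDemand ![1, 2 - ε]] = 4 - 2 * ε := by
  refine le_antisymm (W_le _ fun X _ => ?_) ?_
  · have hlow : (1 : ℝ) ≤ 2 - ε := by linarith
    have h0 : unitDemand ![2 - ε, 1] (X 0) ≤ 2 - ε :=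
      unitDemand_le _ (by linarith) fun j _ => by fin_cases j; exacts [le_rfl, hlow]
    have h1 : unitDemand ![1, 2 - ε] (X 1) ≤ 2 - ε :=
      unitDemand_le _ (by linarith) fun j _ => by fin_cases j; exacts [hlow, le_rfl]
    rw [Fin.sum_univ_two]
    exact (add_le_add h0 h1).trans_eq (by ring)
  · have hopt := le_W ![unitDemand ![2 - ε, 1], unitDemand ![1, 2 - ε]] (X := ![{0}, {1}])
      (by decide)
    rw [Fin.sum_univ_two] at hopt
    simp only [Matrix.cons_val_zero, Matrix.cons_val_one, unitDemand_singleton] at hopt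
    unfold OPT
    linarith

/-- miscoordination; PoA₀ ≥ 2 for the English Walrasian mechanism:
with unit-demand valuations w¹ = (2−ε, 1), w² = (1, 2−ε) (item A is index 0, item B index 1)
and the miscoordinated bids, the bid profile is a pure Nash equilibrium in non-exposure bids
of every English Walrasian mechanism on the GS bid space; the allocation gives B to agent 1
and A to agent 2, with welfare 2, while OPT = 4 − 2ε. -/
theorem stmt15 (ε : ℝ) (hε : 0 < ε) (hε1 : ε < 1) :
    ∀ M : Mechanism 2 2,
      AllocDisjoint M (GSvals 2) → PayNonneg M (GSvals 2) → IsEnglish M (GSvals 2) →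
        IsNash M (GSvals 2) ![unitDemand ![2 - ε, 1], unitDemand ![1, 2 - ε]]
          ![misB1, misB2] ∧
        (∀ i : Fin 2,
          HasExposureFactor M (GSvals 2)
            (![unitDemand ![2 - ε, 1], unitDemand ![1, 2 - ε]] i) i (![misB1, misB2] i) 0) ∧
        M.alloc ![misB1, misB2] 0 = {1} ∧ M.alloc ![misB1, misB2] 1 = {0} ∧
        (∑ i, ![unitDemand ![2 - ε, 1], unitDemand ![1, 2 - ε]] i
            (M.alloc ![misB1, misB2] i)) = 2 ∧
        OPT ![unitDemand ![2 - ε, 1], unitDemand ![1, 2 - ε]] = 4 - 2 * ε := by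
  intro M hdisj _ hM
  have hb : InBidSpace (GSvals 2) ![misB1, misB2] :=
    Fin.forall_fin_two.2 ⟨(indicatorBid_isAdditive 1).isGS, (indicatorBid_isAdditive 0).isGS⟩
  obtain ⟨hX0, hX1⟩ := hM.alloc_misB hdisj hb
  have hhigh : (0 : ℝ) ≤ 2 - ε := by linarith
  have hhigh' : 2 - ε ≤ (1 : ℝ) + 1 := by linarith
  refine ⟨⟨hb, Fin.forall_fin_two.2 ⟨fun bi hbi => ?_, fun bi hbi => ?_⟩⟩,
    Fin.forall_fin_two.2 ⟨?_, ?_⟩, hX0, hX1, ?_, OPT_miscoordination hε1.le⟩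
  · exact hM.unitDemand_util_update_le _ hdisj hb zero_ne_one rfl hX0 one_ne_zero zero_le_one
      (Fin.forall_fin_two.2 ⟨fun h => absurd rfl h, fun _ => le_rfl⟩) hhigh' hbi
  · exact hM.unitDemand_util_update_le _ hdisj hb one_ne_zero rfl hX1 zero_ne_one zero_le_one
      (Fin.forall_fin_two.2 ⟨fun _ => le_rfl, fun h => absurd rfl h⟩) hhigh' hbi
  · exact hM.unitDemand_hasExposureFactor_zero _ (Fin.forall_fin_two.2 ⟨hhigh, zero_le_one⟩)
      (j := 1) le_rfl 0
  · exact hM.unitDemand_hasExposureFactor_zero _ (Fin.forall_fin_two.2 ⟨zero_le_one, hhigh⟩)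
      (j := 0) le_rfl 1
  · simp [Fin.sum_univ_two, hX0, hX1, unitDemand_singleton, one_add_one_eq_two]
end

section
/- (Smoothness-type deviation inequality.) Consider a declared welfare maximizer mechanism on a bid space 𝓑, and let v_i be a valuation of agent i such that the valuation (1/2)·v_i belongs to 𝓑. Then for every profile b_{-i} ∈ 𝓑^{n−1} of bids of the other agents and every subset S ⊆ Fin m, the utility of agent i when deviating to the half-truthful bid satisfies u_i(v_i; (1/2)·v_i, b_{-i}) ≥ (1/2)·v_i(S) − ( W^{b_{-i}}(Fin m) − W^{b_{-i}}(Fin m \ S) ). -/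
open Finset

/-
Write `b'` for the profile in which agent `i` bids `vᵢ / 2`. Since the mechanism allocates
welfare-optimally for `b'`, giving `S` to agent `i` and the best allocation of `[m] \ S` to the
others cannot beat it: `vᵢ(S)/2 + W^{b'₋ᵢ}([m] \ S) ≤ W^{b'}([m]) ≤ vᵢ(Xᵢ)/2 + W^{b'₋ᵢ}([m])`.
Payments never exceed the declared value `vᵢ(Xᵢ)/2`, so the utility is at least `vᵢ(Xᵢ)/2`.
-/

open Finset Function

section Welfare

variable {n m : ℕ}

lemma finite_setOf_exists_eq_apply {α : Type*} [Finite α] (P Q : α → Prop) (f : α → ℝ) :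
    {t : ℝ | ∃ x, P x ∧ Q x ∧ t = f x}.Finite :=
  (Set.finite_range f).subset (by rintro t ⟨x, -, -, rfl⟩; exact ⟨x, rfl⟩)

lemma sum_le_W (b : Fin n → Finset (Fin m) → ℝ) {S : Finset (Fin m)}
    {X : Fin n → Finset (Fin m)} (hX : ∀ k l, k ≠ l → Disjoint (X k) (X l))
    (hXS : ∀ k, X k ⊆ S) :
    ∑ k, b k (X k) ≤ W b S :=
  le_csSup (finite_setOf_exists_eq_apply _ _ _).bddAbove ⟨X, hX, hXS, rfl⟩

lemma sum_erase_le_Wminus (b : Fin n → Finset (Fin m) → ℝ) (i : Fin n) {S : Finset (Fin m)}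
    {X : Fin n → Finset (Fin m)} (hX : ∀ k l, k ≠ l → Disjoint (X k) (X l))
    (hXS : ∀ k, X k ⊆ S) :
    ∑ k ∈ univ.erase i, b k (X k) ≤ Wminus b i S :=
  le_csSup (finite_setOf_exists_eq_apply _ _ _).bddAbove ⟨X, hX, hXS, rfl⟩

lemma exists_Wminus_eq_sum_erase (b : Fin n → Finset (Fin m) → ℝ) (i : Fin n)
    (S : Finset (Fin m)) :
    ∃ X : Fin n → Finset (Fin m), (∀ k l, k ≠ l → Disjoint (X k) (X l)) ∧ (∀ k, X k ⊆ S) ∧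
      Wminus b i S = ∑ k ∈ univ.erase i, b k (X k) :=
  Set.Nonempty.csSup_mem
    (by exact ⟨_, fun _ => ∅, fun _ _ _ => disjoint_empty_left _, fun _ => empty_subset _, rfl⟩)
    (finite_setOf_exists_eq_apply _ _ _)

lemma disjoint_update_of_disjoint {ι α : Type*} [DecidableEq ι] {Y : ι → Finset α} {i : ι}
    {S : Finset α} (hY : ∀ k l, k ≠ l → Disjoint (Y k) (Y l))
    (hS : ∀ k, k ≠ i → Disjoint S (Y k)) :
    ∀ k l, k ≠ l → Disjoint (update Y i S k) (update Y i S l) := by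
  intro k l hkl
  rcases eq_or_ne k i with rfl | hk
  · simpa [update_of_ne hkl.symm] using hS l hkl.symm
  rcases eq_or_ne l i with rfl | hl
  · simpa [update_of_ne hk] using (hS k hk).symm
  · simpa [update_of_ne hk, update_of_ne hl] using hY k l hkl

lemma add_Wminus_sdiff_le_W (b : Fin n → Finset (Fin m) → ℝ) (i : Fin n)
    {S T : Finset (Fin m)} (hST : S ⊆ T) :
    b i S + Wminus b i (T \ S) ≤ W b T := by
  obtain ⟨Y, hY, hYT, hWY⟩ := exists_Wminus_eq_sum_erase b i (T \ S)
  have hS : ∀ k, k ≠ i → Disjoint S (Y k) := fun k _ =>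
    disjoint_of_subset_right (hYT k) disjoint_sdiff
  have hZT : ∀ k, update Y i S k ⊆ T := by
    intro k
    rcases eq_or_ne k i with rfl | hk
    · simpa using hST
    · simpa [update_of_ne hk] using (hYT k).trans sdiff_subset
  calc b i S + Wminus b i (T \ S)
      = ∑ k, b k (update Y i S k) := by
        rw [hWY, ← add_sum_erase _ _ (mem_univ i), update_self]
        congr 1
        exact sum_congr rfl fun k hk => by rw [update_of_ne (ne_of_mem_erase hk)]
    _ ≤ W b T := sum_le_W b (disjoint_update_of_disjoint hY hS) hZT

lemma sub_marginal_le_of_sum_eq_W (b : Fin n → Finset (Fin m) → ℝ) (i : Fin n)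
    (S : Finset (Fin m)) {X : Fin n → Finset (Fin m)}
    (hX : ∀ k l, k ≠ l → Disjoint (X k) (X l)) (hopt : ∑ k, b k (X k) = W b univ) :
    b i S - (Wminus b i univ - Wminus b i (univ \ S)) ≤ b i (X i) := by
  have hlow := add_Wminus_sdiff_le_W b i (subset_univ S)
  have hup := sum_erase_le_Wminus b i hX (fun k => subset_univ (X k))
  rw [← hopt, ← add_sum_erase _ _ (mem_univ i)] at hlow
  linarith

end Welfare

lemma inBidSpace_update {n m : ℕ} {B : Set (Finset (Fin m) → ℝ)}
    {b : Fin n → Finset (Fin m) → ℝ} {i : Fin n} {bi : Finset (Fin m) → ℝ} (hbi : bi ∈ B)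
    (hb : ∀ k, k ≠ i → b k ∈ B) : InBidSpace B (update b i bi) := by
  intro k
  rcases eq_or_ne k i with rfl | hk
  · simpa using hbi
  · simpa [update_of_ne hk] using hb k hk

theorem stmt19_general {n m : ℕ} (B : Set (Finset (Fin m) → ℝ)) (M : Mechanism n m)
    (hM : AllocDisjoint M B) (hDWM : IsDWM M B)
    (i : Fin n) (vi : Finset (Fin m) → ℝ)
    (hhalf : (fun T => (1 / 2 : ℝ) * vi T) ∈ B)
    (b : Fin n → Finset (Fin m) → ℝ) (hb : ∀ k : Fin n, k ≠ i → b k ∈ B)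
    (S : Finset (Fin m)) :
    (1 / 2) * vi S -
        (Wminus (Function.update b i fun T => (1 / 2 : ℝ) * vi T) i Finset.univ -
          Wminus (Function.update b i fun T => (1 / 2 : ℝ) * vi T) i (Finset.univ \ S)) ≤
      util M vi i (Function.update b i fun T => (1 / 2 : ℝ) * vi T) := by
  have hb' := inBidSpace_update hhalf hb
  have hsmooth := sub_marginal_le_of_sum_eq_W _ i S (hM _ hb') (hDWM.1 _ hb')
  have hpay := hDWM.2.1 _ hb' i
  simp only [update_self] at hsmooth hpay
  unfold util
  linarith

/-- smoothness-type deviation inequality: deviating to the half-truthful bid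
guarantees utility at least (1/2)·vᵢ(S) minus the marginal welfare of S for the others. -/
theorem stmt19 {n m : ℕ} (B : Set (Finset (Fin m) → ℝ)) (M : Mechanism n m)
    (hM : AllocDisjoint M B) (hpay : PayNonneg M B) (hDWM : IsDWM M B)
    (i : Fin n) (vi : Finset (Fin m) → ℝ) (hvi : IsValuation vi)
    (hhalf : (fun T => (1 / 2 : ℝ) * vi T) ∈ B)
    (b : Fin n → Finset (Fin m) → ℝ) (hb : ∀ k : Fin n, k ≠ i → b k ∈ B)
    (S : Finset (Fin m)) :
    (1 / 2) * vi S -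
        (Wminus (Function.update b i fun T => (1 / 2 : ℝ) * vi T) i Finset.univ -
          Wminus (Function.update b i fun T => (1 / 2 : ℝ) * vi T) i (Finset.univ \ S)) ≤
      util M vi i (Function.update b i fun T => (1 / 2 : ℝ) * vi T) :=
  stmt19_general B M hM hDWM i vi hhalf b hb S
end
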